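/- arXiv:1002.1192 — 2 statements merged into one kernel-verified Lean document; each statement's English description precedes it below -/
import Mathlib

section
/- Let Γ be a connected simple graph on a finite vertex set, let uv be an edge of Γ, and let x, y be two distinct non-adjacent vertices of Γ such that the graph Γ' obtained from Γ by deleting the edge uv and adding the edge xy is connected. Then there exists a finite sequence of edge slides transforming Γ into Γ'. (In words: any move of a single edge which preserves connectedness is a combination of edge slides.) -/
/-- An edge slide: given distinct vertices `x, y, z` with `x ~ y`, `y ~ z` and `x ≁ z`,
slide the edge `xy` to `xz`. -/
def EdgeSlide {V : Type*} (G G' : SimpleGraph V) : Prop :=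
  ∃ x y z : V, x ≠ z ∧ G.Adj x y ∧ G.Adj y z ∧ ¬ G.Adj x z ∧
    G' = G.deleteEdges {s(x, y)} ⊔ SimpleGraph.fromEdgeSet {s(x, z)}

/-!
A slide is undone by a slide and preserves the number of edges. Fix a vertex `c`. A connected
graph slides to one in which `c` is universal: as long as it is not, some vertex `w` not adjacent
to `c` has a neighbour `s` adjacent to `c`, and `ws` slides to `wc`. When `c` is universal, any
edge can be moved to any non-edge, neither containing `c`, by slides through `c`; hence any two
graphs with the same number of edges in which `c` is universal are related by slides. It
remains to slide both graphs of the theorem to such graphs.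
-/

namespace SimpleGraph

variable {V : Type*} {G G' : SimpleGraph V} {a b : V} {e f g : Sym2 V}

def replaceEdge (G : SimpleGraph V) (e f : Sym2 V) : SimpleGraph V :=
  G.deleteEdges {e} ⊔ fromEdgeSet {f}

theorem edgeSet_replaceEdge :
    (G.replaceEdge e f).edgeSet = G.edgeSet \ {e} ∪ {f} \ Sym2.diagSet := by
  rw [replaceEdge, edgeSet_sup, edgeSet_deleteEdges, edgeSet_fromEdgeSet]

theorem edgeSet_replaceEdge_of_not_isDiag (hf : ¬f.IsDiag) :
    (G.replaceEdge e f).edgeSet = insert f (G.edgeSet \ {e}) := by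
  have hfd : Disjoint {f} Sym2.diagSet := Set.disjoint_singleton_left.2 hf
  rw [edgeSet_replaceEdge, sdiff_eq_left.2 hfd, Set.union_singleton]

theorem adj_replaceEdge_iff :
    (G.replaceEdge e f).Adj a b ↔ G.Adj a b ∧ s(a, b) ≠ e ∨ s(a, b) = f ∧ a ≠ b := by
  simp [replaceEdge]

theorem replaceEdge_self (he : e ∈ G.edgeSet) : G.replaceEdge e e = G := by
  rw [← edgeSet_inj, edgeSet_replaceEdge_of_not_isDiag (G.not_isDiag_of_mem_edgeSet he),
    Set.insert_sdiff_singleton, Set.insert_eq_of_mem he]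

theorem replaceEdge_replaceEdge_of_notMem (hg : g ∉ G.edgeSet) :
    (G.replaceEdge e g).replaceEdge g f = G.replaceEdge e f := by
  rw [← edgeSet_inj]
  ext d
  simp only [edgeSet_replaceEdge, Set.mem_union, Set.mem_sdiff, Set.mem_singleton_iff]
  grind

theorem replaceEdge_replaceEdge_of_mem (hg : g ∈ G.edgeSet) (hge : g ≠ e) (hfe : f ≠ e) :
    (G.replaceEdge g f).replaceEdge e g = G.replaceEdge e f := by
  have : g ∉ Sym2.diagSet := G.not_isDiag_of_mem_edgeSet hg
  rw [← edgeSet_inj]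
  ext d
  simp only [edgeSet_replaceEdge, Set.mem_union, Set.mem_sdiff, Set.mem_singleton_iff]
  grind

theorem ncard_edgeSet_replaceEdge [Finite V] (he : e ∈ G.edgeSet) (hf : f ∉ G.edgeSet)
    (hfd : ¬f.IsDiag) : (G.replaceEdge e f).edgeSet.ncard = G.edgeSet.ncard := by
  rw [edgeSet_replaceEdge_of_not_isDiag hfd, Set.ncard_insert_of_notMem fun h => hf h.1,
    Set.ncard_sdiff_singleton_add_one he]

theorem Connected.of_adj_le_reachable (hG : G.Connected) (h : G.Adj ≤ G'.Reachable) :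
    G'.Connected := by
  have hle : G.Reachable ≤ G'.Reachable := by
    simpa only [reachable_eq_reflTransGen] using
      Relation.reflTransGen_closed (reachable_eq_reflTransGen (G := G') ▸ h)
  have := hG.nonempty
  exact ⟨fun a b => hle a b (hG.preconnected a b)⟩

end SimpleGraph

section EdgeSlide

open SimpleGraph

variable {V : Type*} {G G' : SimpleGraph V} {x y z : V}

theorem edgeSlide_replaceEdge (hxz : x ≠ z) (hxy : G.Adj x y) (hyz : G.Adj y z)
    (hnxz : ¬G.Adj x z) : EdgeSlide G (G.replaceEdge s(x, y) s(x, z)) :=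
  ⟨x, y, z, hxz, hxy, hyz, hnxz, rfl⟩

theorem EdgeSlide.symm (h : EdgeSlide G G') : EdgeSlide G' G := by
  obtain ⟨x, y, z, hxz, hxy, hyz, hnxz, rfl⟩ := h
  refine ⟨x, z, y, hxy.ne, ?_, ?_, ?_, ?_⟩
  · exact adj_replaceEdge_iff.2 (.inr ⟨rfl, hxz⟩)
  · exact adj_replaceEdge_iff.2 (.inl ⟨hyz.symm, by simp [hxz.symm, hyz.ne']⟩)
  · simp [hxz, hyz.ne]
  · change G = (G.replaceEdge _ _).replaceEdge _ _
    rw [replaceEdge_replaceEdge_of_notMem hnxz, replaceEdge_self hxy]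

instance : Std.Symm (EdgeSlide (V := V)) := ⟨fun _ _ => EdgeSlide.symm⟩

theorem EdgeSlide.ncard_edgeSet_eq [Finite V] (h : EdgeSlide G G') :
    G'.edgeSet.ncard = G.edgeSet.ncard := by
  obtain ⟨x, y, z, hxz, hxy, -, hnxz, rfl⟩ := h
  exact ncard_edgeSet_replaceEdge hxy hnxz (Sym2.mk_isDiag_iff.not.2 hxz)

theorem EdgeSlide.connected (h : EdgeSlide G G') (hG : G.Connected) : G'.Connected := by
  obtain ⟨x, y, z, hxz, hxy, hyz, -, rfl⟩ := h
  refine hG.of_adj_le_reachable fun a b hab => ?_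
  by_cases he : s(a, b) = s(x, y)
  · have hzy : (G.replaceEdge s(x, y) s(x, z)).Adj z y :=
      adj_replaceEdge_iff.2 (.inl ⟨hyz.symm, by simp [hxz.symm, hyz.ne']⟩)
    have hxy' := (adj_replaceEdge_iff.2 (.inr ⟨rfl, hxz⟩)).reachable.trans hzy.reachable
    rcases Sym2.eq_iff.1 he with ⟨rfl, rfl⟩ | ⟨rfl, rfl⟩
    exacts [hxy', hxy'.symm]
  · exact (adj_replaceEdge_iff.2 (.inl ⟨hab, he⟩)).reachable

theorem ncard_edgeSet_eq_of_reflTransGen_edgeSlide [Finite V]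
    (h : Relation.ReflTransGen EdgeSlide G G') : G'.edgeSet.ncard = G.edgeSet.ncard := by
  induction h with
  | refl => rfl
  | tail _ hstep ih => rw [hstep.ncard_edgeSet_eq, ih]

end EdgeSlide

namespace SimpleGraph

variable {V : Type*} {G : SimpleGraph V} {a b c d p q : V} {e f : Sym2 V}

theorem IsUniversal.replaceEdge (hc : G.IsUniversal c) (hce : c ∉ e) :
    (G.replaceEdge e f).IsUniversal c := fun w hw =>
  adj_replaceEdge_iff.2 (.inl ⟨hc hw, fun h => hce (h ▸ Sym2.mem_mk_left c w)⟩)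

theorem IsUniversal.mem_edgeSet (hc : G.IsUniversal c) (hce : c ∈ e) (he : ¬e.IsDiag) :
    e ∈ G.edgeSet := by
  rw [← Sym2.other_spec hce] at he ⊢
  exact hc (Sym2.mk_isDiag_iff.not.1 he)

/-- Slide `ac` to `ad` along `cd`, then `ab` to `ac` along `bc`. -/
theorem IsUniversal.reflTransGen_edgeSlide_replaceEdge_of_shared_vertex (hc : G.IsUniversal c)
    (hab : G.Adj a b) (had : ¬G.Adj a d) (had' : a ≠ d) (hca : c ≠ a) (hcb : c ≠ b)
    (hcd : c ≠ d) : Relation.ReflTransGen EdgeSlide G (G.replaceEdge s(a, b) s(a, d)) := by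
  have hdb : d ≠ b := by rintro rfl; exact had hab
  have hab_ne := hab.ne
  have h₁ : EdgeSlide G (G.replaceEdge s(a, c) s(a, d)) :=
    edgeSlide_replaceEdge had' (hc hca).symm (hc hcd) had
  have h₂ : EdgeSlide (G.replaceEdge s(a, c) s(a, d))
      ((G.replaceEdge s(a, c) s(a, d)).replaceEdge s(a, b) s(a, c)) :=
    edgeSlide_replaceEdge hca.symm
      (adj_replaceEdge_iff.2 (.inl ⟨hab, by grind [Sym2.eq_iff]⟩))
      (adj_replaceEdge_iff.2 (.inl ⟨(hc hcb).symm, by grind [Sym2.eq_iff]⟩))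
      (by grind [adj_replaceEdge_iff, Sym2.eq_iff])
  rw [replaceEdge_replaceEdge_of_mem (hc hca).symm (by grind [Sym2.eq_iff])
    (by grind [Sym2.eq_iff])] at h₂
  exact .tail (.single h₁) h₂

/-- Route through `ap`: if it is an edge, first move it to `pq` and then `ab` into its place;
otherwise move `ab` to `ap` and then on to `pq`. -/
theorem IsUniversal.reflTransGen_edgeSlide_replaceEdge_of_disjoint (hc : G.IsUniversal c)
    (hab : G.Adj a b) (hpq : ¬G.Adj p q) (hpq' : p ≠ q) (hap : a ≠ p) (haq : a ≠ q)
    (hbp : b ≠ p) (hca : c ≠ a) (hcb : c ≠ b) (hcp : c ≠ p) (hcq : c ≠ q) :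
    Relation.ReflTransGen EdgeSlide G (G.replaceEdge s(a, b) s(p, q)) := by
  have hab_ne := hab.ne
  by_cases hadj : G.Adj a p
  · have h₁ :=
      hc.reflTransGen_edgeSlide_replaceEdge_of_shared_vertex hadj.symm hpq hpq' hcp hca hcq
    have hc' : (G.replaceEdge s(p, a) s(p, q)).IsUniversal c :=
      hc.replaceEdge (by simp [hcp, hca])
    have h₂ := hc'.reflTransGen_edgeSlide_replaceEdge_of_shared_vertex
      (adj_replaceEdge_iff.2 (.inl ⟨hab, by grind [Sym2.eq_iff]⟩))
      (by grind [adj_replaceEdge_iff, Sym2.eq_iff]) hap hca hcb hcp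
    rw [Sym2.eq_swap (a := p) (b := a)] at h₁ h₂
    rw [replaceEdge_replaceEdge_of_mem (e := s(a, b)) (f := s(p, q)) hadj
      (by grind [Sym2.eq_iff]) (by grind [Sym2.eq_iff])] at h₂
    exact h₁.trans h₂
  · have h₁ := hc.reflTransGen_edgeSlide_replaceEdge_of_shared_vertex hab hadj hap hca hcb hcp
    have hc' : (G.replaceEdge s(a, b) s(a, p)).IsUniversal c :=
      hc.replaceEdge (by simp [hca, hcb])
    have h₂ := hc'.reflTransGen_edgeSlide_replaceEdge_of_shared_vertex
      (adj_replaceEdge_iff.2 (.inr ⟨Sym2.eq_swap, hap.symm⟩))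
      (by grind [adj_replaceEdge_iff, Sym2.eq_iff]) hpq' hcp hca hcq
    rw [Sym2.eq_swap (a := p) (b := a), replaceEdge_replaceEdge_of_notMem hadj] at h₂
    exact h₁.trans h₂

theorem IsUniversal.reflTransGen_edgeSlide_replaceEdge (hc : G.IsUniversal c)
    (he : e ∈ G.edgeSet) (hf : f ∉ G.edgeSet) (hfd : ¬f.IsDiag) (hce : c ∉ e)
    (hcf : c ∉ f) :
    Relation.ReflTransGen EdgeSlide G (G.replaceEdge e f) := by
  by_cases hshared : ∃ a, a ∈ e ∧ a ∈ f
  · obtain ⟨a, hae, haf⟩ := hshared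
    obtain ⟨b, rfl⟩ : ∃ b, e = s(a, b) := ⟨_, (Sym2.other_spec hae).symm⟩
    obtain ⟨d, rfl⟩ : ∃ d, f = s(a, d) := ⟨_, (Sym2.other_spec haf).symm⟩
    simp only [Sym2.mem_iff, not_or, Sym2.mk_isDiag_iff] at hce hcf hfd
    exact hc.reflTransGen_edgeSlide_replaceEdge_of_shared_vertex he hf hfd hce.1 hce.2 hcf.2
  · induction e using Sym2.ind with | _ a b => ?_
    induction f using Sym2.ind with | _ p q => ?_
    simp only [Sym2.mem_iff, not_or, Sym2.mk_isDiag_iff, not_exists, not_and]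
      at hce hcf hfd hshared
    exact hc.reflTransGen_edgeSlide_replaceEdge_of_disjoint he hf hfd
      (hshared a (.inl rfl) |>.1) (hshared a (.inl rfl) |>.2) (hshared b (.inr rfl) |>.1)
      hce.1 hce.2 hcf.1 hcf.2

theorem IsUniversal.reflTransGen_edgeSlide_of_ncard_eq [Finite V] {H₁ H₂ : SimpleGraph V}
    (h₁ : H₁.IsUniversal c) (h₂ : H₂.IsUniversal c)
    (hcard : H₁.edgeSet.ncard = H₂.edgeSet.ncard) :
    Relation.ReflTransGen EdgeSlide H₁ H₂ := by
  obtain hsub | ⟨e, he⟩ := (H₁.edgeSet \ H₂.edgeSet).eq_empty_or_nonempty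
  · rw [edgeSet_inj.1 (Set.eq_of_subset_of_ncard_le (Set.sdiff_eq_empty.1 hsub) hcard.ge)]
  obtain ⟨f, hf⟩ : (H₂.edgeSet \ H₁.edgeSet).Nonempty := by
    refine Set.nonempty_of_ncard_ne_zero ?_
    rw [← (Set.ncard_eq_ncard_iff_ncard_sdiff_eq_ncard_sdiff
      (Set.toFinite _) (Set.toFinite _)).1 hcard]
    exact ((Set.ncard_pos (Set.toFinite _)).2 ⟨e, he⟩).ne'
  have hfd := H₂.not_isDiag_of_mem_edgeSet hf.1
  have hce : c ∉ e := fun hce =>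
    he.2 (h₂.mem_edgeSet hce (H₁.not_isDiag_of_mem_edgeSet he.1))
  have hcf : c ∉ f := fun hcf => hf.2 (h₁.mem_edgeSet hcf hfd)
  refine (h₁.reflTransGen_edgeSlide_replaceEdge he.1 hf.2 hfd hce hcf).trans ?_
  exact (h₁.replaceEdge hce).reflTransGen_edgeSlide_of_ncard_eq h₂
    (by rw [ncard_edgeSet_replaceEdge he.1 hf.2 hfd, hcard])
termination_by (H₁.edgeSet \ H₂.edgeSet).ncard
decreasing_by
  rw [edgeSet_replaceEdge_of_not_isDiag hfd, Set.insert_sdiff_of_mem _ hf.1,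
    Set.sdiff_sdiff_comm]
  exact Set.ncard_sdiff_singleton_lt_of_mem he

theorem Connected.exists_edgeSlide_neighborSet_ssubset (hG : G.Connected)
    (hc : ¬G.IsUniversal c) : ∃ G', EdgeSlide G G' ∧ G.neighborSet c ⊂ G'.neighborSet c := by
  obtain ⟨w, hcw, hw⟩ : ∃ w, c ≠ w ∧ ¬G.Adj c w := by simpa [IsUniversal] using hc
  obtain ⟨walk⟩ := hG.preconnected c w
  obtain ⟨⟨⟨s, t⟩, hst⟩, -, hs, ht⟩ :=
    walk.exists_boundary_dart (insert c (G.neighborSet c)) (Set.mem_insert c _)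
      (by simp [hcw.symm, hw])
  simp only [Set.mem_insert_iff, mem_neighborSet, not_or] at hs ht
  have hcs : G.Adj c s := hs.resolve_left (by rintro rfl; exact ht.2 hst)
  refine ⟨G.replaceEdge s(t, s) s(t, c),
    edgeSlide_replaceEdge ht.1 hst.symm hcs.symm (fun h => ht.2 h.symm), ?_⟩
  refine (Set.ssubset_iff_of_subset fun v hv => ?_).2 ⟨t, ?_, ht.2⟩
  · have := hcs.ne
    exact adj_replaceEdge_iff.2 (.inl ⟨hv, by grind [Sym2.eq_iff]⟩)
  · exact adj_replaceEdge_iff.2 (.inr ⟨Sym2.eq_swap, Ne.symm ht.1⟩)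

theorem Connected.exists_reflTransGen_edgeSlide_isUniversal [Finite V] {G : SimpleGraph V}
    (hG : G.Connected) (c : V) :
    ∃ H, Relation.ReflTransGen EdgeSlide G H ∧ H.IsUniversal c := by
  by_cases hc : G.IsUniversal c
  · exact ⟨G, .refl, hc⟩
  obtain ⟨G', hGG', hN⟩ := hG.exists_edgeSlide_neighborSet_ssubset hc
  obtain ⟨H, hG'H, hH⟩ := (hGG'.connected hG).exists_reflTransGen_edgeSlide_isUniversal c
  exact ⟨H, .head hGG' hG'H, hH⟩
termination_by (G.neighborSet c)ᶜ.ncard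
decreasing_by exact Set.ncard_lt_ncard (compl_lt_compl_iff_lt.2 hN)

end SimpleGraph

open SimpleGraph in
/-- Any move of a single edge which preserves connectedness is a combination of edge slides. -/
theorem edge_move_is_combination_of_slides {V : Type*} [Fintype V] (G : SimpleGraph V)
    (hc : G.Connected)
    (u v x y : V) (huv : G.Adj u v) (hxy : x ≠ y) (hnadj : ¬ G.Adj x y)
    (hconn : (G.deleteEdges {s(u, v)} ⊔ SimpleGraph.fromEdgeSet {s(x, y)}).Connected) :
    Relation.ReflTransGen EdgeSlide G
      (G.deleteEdges {s(u, v)} ⊔ SimpleGraph.fromEdgeSet {s(x, y)}) := by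
  change Relation.ReflTransGen EdgeSlide G (G.replaceEdge s(u, v) s(x, y))
  change (G.replaceEdge s(u, v) s(x, y)).Connected at hconn
  obtain ⟨H₁, hGH₁, hH₁⟩ := hc.exists_reflTransGen_edgeSlide_isUniversal u
  obtain ⟨H₂, hG'H₂, hH₂⟩ := hconn.exists_reflTransGen_edgeSlide_isUniversal u
  have hcard : H₁.edgeSet.ncard = H₂.edgeSet.ncard := by
    rw [ncard_edgeSet_eq_of_reflTransGen_edgeSlide hGH₁,
      ncard_edgeSet_eq_of_reflTransGen_edgeSlide hG'H₂,
      ncard_edgeSet_replaceEdge (G.mem_edgeSet.2 huv) hnadj (Sym2.mk_isDiag_iff.not.2 hxy)]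
  exact hGH₁.trans ((hH₁.reflTransGen_edgeSlide_of_ncard_eq hH₂ hcard).trans (symm hG'H₂))
end

section
/- Every connected simple graph Γ on a finite vertex set is slide-equivalent to an almost regular graph: there exists a finite sequence of edge slides transforming Γ into a graph Γ̃ on the same vertex set such that |d(x) − d(y)| ≤ 1 for all vertices x, y of Γ̃. -/
namespace SimpleGraph

variable {V : Type*} {G G' : SimpleGraph V} {x y z : V}

def slide (G : SimpleGraph V) (x y z : V) : SimpleGraph V :=
  G.deleteEdges {s(x, y)} ⊔ fromEdgeSet {s(x, z)}

theorem edgeSlide_slide (hxz : x ≠ z) (hxy : G.Adj x y) (hyz : G.Adj y z) (hnxz : ¬G.Adj x z) :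
    EdgeSlide G (G.slide x y z) :=
  ⟨x, y, z, hxz, hxy, hyz, hnxz, rfl⟩

theorem slide_adj (hxz : x ≠ z) {u v : V} :
    (G.slide x y z).Adj u v ↔ G.Adj u v ∧ s(u, v) ≠ s(x, y) ∨ s(u, v) = s(x, z) := by
  simp only [slide, sup_adj, deleteEdges_adj, fromEdgeSet_adj, Set.mem_singleton_iff]
  constructor
  · rintro (h | ⟨h, -⟩) <;> tauto
  · rintro (h | h)
    · exact .inl h
    · refine .inr ⟨h, fun huv => hxz ?_⟩
      subst huv
      grind [Sym2.eq_iff]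

theorem mem_edgeSet_slide_of_notMem {e : Sym2 V} (he : e ∈ G.edgeSet) (hy : y ∉ e) :
    e ∈ (G.slide x y z).edgeSet :=
  edgeSet_mono le_sup_left <| by
    rw [edgeSet_deleteEdges]
    exact ⟨he, fun h => hy (h ▸ Sym2.mem_mk_right x y)⟩

theorem neighborSet_slide_middle (hxz : x ≠ z) (hxy : x ≠ y) (hyz : y ≠ z) :
    (G.slide x y z).neighborSet y = G.neighborSet y \ {x} := by
  ext w
  simp only [mem_neighborSet, slide_adj hxz, Sym2.eq_iff, Set.mem_sdiff, Set.mem_singleton_iff]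
  grind

theorem neighborSet_slide_right (hxz : x ≠ z) :
    (G.slide x y z).neighborSet z = insert x (G.neighborSet z) := by
  ext w
  simp only [mem_neighborSet, slide_adj hxz, Sym2.eq_iff, Set.mem_insert_iff]
  grind

theorem neighborSet_slide_left (hxz : x ≠ z) :
    (G.slide x y z).neighborSet x = insert z (G.neighborSet x \ {y}) := by
  ext w
  simp only [mem_neighborSet, slide_adj hxz, Sym2.eq_iff, Set.mem_sdiff, Set.mem_insert_iff,
    Set.mem_singleton_iff]
  grind

theorem neighborSet_slide_of_ne (hxz : x ≠ z) {v : V} (hx : v ≠ x) (hy : v ≠ y) (hz : v ≠ z) :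
    (G.slide x y z).neighborSet v = G.neighborSet v := by
  ext w
  simp only [mem_neighborSet, slide_adj hxz, Sym2.eq_iff]
  grind

section Finite

variable [Finite V]

theorem ncard_neighborSet_slide_middle (hxz : x ≠ z) (hxy : G.Adj x y) (hyz : y ≠ z) :
    ((G.slide x y z).neighborSet y).ncard + 1 = (G.neighborSet y).ncard := by
  rw [neighborSet_slide_middle hxz hxy.ne hyz]
  exact Set.ncard_sdiff_singleton_add_one hxy.symm

theorem ncard_neighborSet_slide_right (hxz : x ≠ z) (hnxz : ¬G.Adj x z) :
    ((G.slide x y z).neighborSet z).ncard = (G.neighborSet z).ncard + 1 := by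
  rw [neighborSet_slide_right hxz]
  exact Set.ncard_insert_of_notMem fun h => hnxz h.symm

theorem ncard_neighborSet_slide_of_ne (hxz : x ≠ z) (hxy : G.Adj x y) (hnxz : ¬G.Adj x z) {v : V}
    (hy : v ≠ y) (hz : v ≠ z) :
    ((G.slide x y z).neighborSet v).ncard = (G.neighborSet v).ncard := by
  obtain rfl | hx := eq_or_ne v x
  · rw [neighborSet_slide_left hxz, Set.ncard_insert_of_notMem fun h => hnxz h.1,
      Set.ncard_sdiff_singleton_add_one ((G.mem_neighborSet _ _).2 hxy)]
  · rw [neighborSet_slide_of_ne hxz hx hy hz]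

theorem exists_adj_not_adj_of_ncard_lt (hyz : G.Adj y z)
    (hlt : (G.neighborSet z).ncard < (G.neighborSet y).ncard) :
    ∃ x, G.Adj x y ∧ x ≠ z ∧ ¬G.Adj x z := by
  by_contra! h
  have hsub : G.neighborSet y \ {z} ⊆ G.neighborSet z \ {y} := fun w ⟨hw, hwz⟩ =>
    ⟨(h w hw.symm hwz).symm, fun hwy => G.irrefl (hwy ▸ hw)⟩
  have := Set.ncard_le_ncard hsub
  rw [← Set.ncard_sdiff_singleton_add_one ((G.mem_neighborSet y z).2 hyz),
    ← Set.ncard_sdiff_singleton_add_one ((G.mem_neighborSet z y).2 hyz.symm)] at hlt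
  omega

theorem exists_edgeSlide_of_adj_of_ncard_lt (hyz : G.Adj y z)
    (hlt : (G.neighborSet z).ncard < (G.neighborSet y).ncard) :
    ∃ G', EdgeSlide G G' ∧ (G'.neighborSet y).ncard + 1 = (G.neighborSet y).ncard ∧
      (G'.neighborSet z).ncard = (G.neighborSet z).ncard + 1 ∧
      (∀ v, v ≠ y → v ≠ z → (G'.neighborSet v).ncard = (G.neighborSet v).ncard) ∧
      ∀ e ∈ G.edgeSet, y ∉ e → e ∈ G'.edgeSet := by
  obtain ⟨x, hxy, hxz, hnxz⟩ := exists_adj_not_adj_of_ncard_lt hyz hlt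
  exact ⟨G.slide x y z, edgeSlide_slide hxz hxy hyz hnxz,
    ncard_neighborSet_slide_middle hxz hxy hyz.ne, ncard_neighborSet_slide_right hxz hnxz,
    fun _ => ncard_neighborSet_slide_of_ne hxz hxy hnxz, fun _ => mem_edgeSet_slide_of_notMem⟩

end Finite

variable [Fintype V]

noncomputable def sumSqDegrees (G : SimpleGraph V) : ℕ :=
  ∑ v, (G.neighborSet v).ncard ^ 2

theorem sumSqDegrees_add_of_ncard (hyz : y ≠ z)
    (hy : (G'.neighborSet y).ncard + 1 = (G.neighborSet y).ncard)
    (hz : (G'.neighborSet z).ncard = (G.neighborSet z).ncard + 1)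
    (hv : ∀ v, v ≠ y → v ≠ z → (G'.neighborSet v).ncard = (G.neighborSet v).ncard) :
    sumSqDegrees G' + 2 * (G.neighborSet y).ncard =
      sumSqDegrees G + 2 * (G.neighborSet z).ncard + 2 := by
  have hdiff : ∑ v, ((G'.neighborSet v).ncard ^ 2 - (G.neighborSet v).ncard ^ 2 : ℤ) =
      ((G'.neighborSet y).ncard ^ 2 - (G.neighborSet y).ncard ^ 2 : ℤ) +
        ((G'.neighborSet z).ncard ^ 2 - (G.neighborSet z).ncard ^ 2 : ℤ) :=
    Finset.sum_eq_add_of_mem y z (Finset.mem_univ y) (Finset.mem_univ z) hyz fun v _ hv' => by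
      rw [hv v hv'.1 hv'.2, sub_self]
  rw [Finset.sum_sub_distrib, ← hy, hz] at hdiff
  unfold sumSqDegrees
  zify
  push_cast at hdiff
  linarith

end SimpleGraph

namespace EdgeSlide

open SimpleGraph

variable {V : Type*} {G G' : SimpleGraph V}

theorem reachable (h : EdgeSlide G G') {u v : V} (huv : G.Reachable u v) :
    G'.Reachable u v := by
  obtain ⟨x, y, z, hxz, hxy, hyz, -, rfl⟩ := h
  have hxz' : (G.slide x y z).Adj x z := (slide_adj hxz).2 (.inr rfl)
  have hyz' : (G.slide x y z).Adj y z :=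
    (slide_adj hxz).2 (.inl ⟨hyz, fun h => hyz.ne (by grind [Sym2.eq_iff])⟩)
  have hadj : ∀ a b, G.Adj a b → (G.slide x y z).Reachable a b := by
    intro a b hab
    by_cases he : s(a, b) = s(x, y)
    · have hxy' : (G.slide x y z).Reachable x y := hxz'.reachable.trans hyz'.symm.reachable
      rcases Sym2.eq_iff.1 he with ⟨rfl, rfl⟩ | ⟨rfl, rfl⟩
      exacts [hxy', hxy'.symm]
    · exact ((slide_adj hxz).2 (.inl ⟨hab, he⟩)).reachable
  obtain ⟨p⟩ := huv
  induction p with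
  | nil => rfl
  | cons hab _ ih => exact (hadj _ _ hab).trans ih

theorem connected_s8 (h : EdgeSlide G G') (hG : G.Connected) : G'.Connected :=
  (connected_iff _).2 ⟨fun u v => h.reachable (hG u v), hG.nonempty⟩

theorem connected_of_reflTransGen (h : Relation.ReflTransGen EdgeSlide G G') (hG : G.Connected) :
    G'.Connected := by
  induction h with
  | refl => exact hG
  | tail _ hslide ih => exact hslide.connected_s8 ih

end EdgeSlide

namespace SimpleGraph

variable {V : Type*} [Fintype V] {G : SimpleGraph V}

theorem Walk.IsPath.exists_edgeSlides_sumSqDegrees_lt {a b : V} {p : G.Walk a b} (hp : p.IsPath)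
    (hab : (G.neighborSet b).ncard + 2 ≤ (G.neighborSet a).ncard) :
    ∃ G', Relation.ReflTransGen EdgeSlide G G' ∧ sumSqDegrees G' < sumSqDegrees G := by
  induction hn : p.length generalizing G a with
  | zero =>
    obtain rfl := Walk.eq_of_length_eq_zero hn
    omega
  | succ n ih =>
    cases p with
    | nil => simp at hn
    | @cons _ q _ haq t =>
    obtain ⟨ht, ha⟩ := (Walk.cons_isPath_iff haq t).1 hp
    by_cases hq : (G.neighborSet a).ncard ≤ (G.neighborSet q).ncard
    · exact ih ht (by omega) (by simpa using hn)
    obtain ⟨G₁, hslide, hy, hz, hv, he⟩ := exists_edgeSlide_of_adj_of_ncard_lt haq (by omega)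
    have hsum := sumSqDegrees_add_of_ncard haq.ne hy hz hv
    by_cases hstrict : (G.neighborSet q).ncard + 2 ≤ (G.neighborSet a).ncard
    · exact ⟨G₁, .single hslide, by omega⟩
    have hb := hv b (by rintro rfl; omega) (by rintro rfl; omega)
    have ht₁ : ∀ e ∈ t.edges, e ∈ G₁.edgeSet := fun e het =>
      he e (t.edges_subset_edgeSet het) fun hae => ha (t.mem_support_of_mem_edges het hae)
    obtain ⟨G₂, h₂, hlt⟩ := ih (ht.transfer ht₁) (by omega) (by simpa using hn)
    exact ⟨G₂, .head hslide h₂, by omega⟩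

end SimpleGraph

/-- Every connected simple graph is slide-equivalent to an almost regular graph:
one in which any two vertex degrees differ by at most `1`. -/
theorem slide_equivalent_to_almost_regular {V : Type*} [Fintype V] (G : SimpleGraph V)
    (hc : G.Connected) :
    ∃ G' : SimpleGraph V, Relation.ReflTransGen EdgeSlide G G' ∧
      ∀ x y : V, (G'.neighborSet x).ncard ≤ (G'.neighborSet y).ncard + 1 := by
  induction hΦ : G.sumSqDegrees using Nat.strong_induction_on generalizing G with
  | _ n ih =>
  by_cases hreg : ∀ x y : V, (G.neighborSet x).ncard ≤ (G.neighborSet y).ncard + 1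
  · exact ⟨G, .refl, hreg⟩
  push Not at hreg
  obtain ⟨a, b, hab⟩ := hreg
  obtain ⟨p, hp⟩ := (hc a b).exists_isPath
  obtain ⟨G₁, h₁, hlt⟩ := hp.exists_edgeSlides_sumSqDegrees_lt (by omega)
  obtain ⟨G₂, h₂, hreg⟩ := ih _ (hΦ ▸ hlt) G₁ (EdgeSlide.connected_of_reflTransGen h₁ hc) rfl
  exact ⟨G₂, h₁.trans h₂, hreg⟩
end
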